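/- arXiv:1202.6036 — 2 statements merged into one kernel-verified Lean document; each statement's English description precedes it below -/
import Mathlib

section
/- Let h ∈ ℝ⁴ \ {0} with |h| ≤ 1 and let v ∈ B⁴ (the open unit ball in ℝ⁴). Then F_v(B⁴_{√(2(1−|h|))}(h/|h|) ∩ S³) = B⁴_R(Q/|Q|) ∩ S³, where Q = (1−|v|²)h − 2(|h|² − ⟨h,v⟩)v and R = √(2(1 − (|h|²(1+|v|²) − 2⟨h,v⟩)/|Q|)). -/
noncomputable section

open Metric
open scoped RealInnerProductSpace

/-- Euclidean four-space `ℝ⁴`. -/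
abbrev E4 : Type := EuclideanSpace ℝ (Fin 4)

/-- The round unit three-sphere `S³ ⊆ ℝ⁴`. -/
def S3 : Set E4 := Metric.sphere 0 1

/-- The conformal transformation `F_v(x) = ((1-|v|²)/|x-v|²)(x-v) - v` of `S³`,
for `v` in the open unit ball `B⁴`. -/
def confMap (v x : E4) : E4 := ((1 - ‖v‖ ^ 2) / ‖x - v‖ ^ 2) • (x - v) - v

lemma sub_norm_sq (x v : E4) (hx : ‖x‖ = 1) : ‖x - v‖ ^ 2 = 1 - 2 * ⟪x, v⟫ + ‖v‖ ^ 2 := by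
  rw [norm_sub_sq_real, hx]; ring

lemma sub_pos_of (x v : E4) (hx : ‖x‖ = 1) (hv : ‖v‖ < 1) : 0 < ‖x - v‖ := by
  rw [norm_pos_iff, sub_ne_zero]
  rintro rfl; exact absurd hx (by linarith [hv])

lemma confMap_norm (v x : E4) (hx : ‖x‖ = 1) (hv : ‖v‖ < 1) : ‖confMap v x‖ = 1 := by
  have hd := sub_pos_of x v hx hv
  have hd2 : ‖x - v‖ ^ 2 = 1 - 2 * ⟪x, v⟫ + ‖v‖ ^ 2 := sub_norm_sq x v hx
  have key : ‖confMap v x‖ ^ 2 = 1 := by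
    rw [confMap, norm_sub_sq_real, real_inner_smul_left, norm_smul, inner_sub_left,
      real_inner_self_eq_norm_sq, Real.norm_eq_abs, mul_pow, sq_abs, div_pow]
    generalize hX : (⟪x, v⟫ : ℝ) = X at hd2 ⊢
    generalize hD : ‖x - v‖ = d at hd2 hd ⊢
    generalize ‖v‖ = nv at hd2 ⊢
    have hDpos : (0:ℝ) < 1 - 2 * X + nv ^ 2 := by rw [← hd2]; positivity
    rw [hd2]
    field_simp
    ring
  nlinarith [norm_nonneg (confMap v x)]

lemma confMap_invol (v x : E4) (hx : ‖x‖ = 1) (hv : ‖v‖ < 1) :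
    confMap (-v) (confMap v x) = x := by
  have hd := sub_pos_of x v hx hv
  have ha : (0:ℝ) < 1 - ‖v‖ ^ 2 := by nlinarith [norm_nonneg v]
  have e1 : confMap v x - -v = ((1 - ‖v‖ ^ 2) / ‖x - v‖ ^ 2) • (x - v) := by
    rw [confMap]; abel
  rw [confMap, e1, norm_neg, norm_smul, smul_smul, Real.norm_eq_abs, mul_pow, sq_abs, div_pow]
  have hc : (1 - ‖v‖ ^ 2) / (((1 - ‖v‖ ^ 2) ^ 2 / (‖x - v‖ ^ 2) ^ 2) * ‖x - v‖ ^ 2) *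
      ((1 - ‖v‖ ^ 2) / ‖x - v‖ ^ 2) = 1 := by
    have hdne : ‖x - v‖ ≠ 0 := ne_of_gt hd
    have hane : (1 - ‖v‖ ^ 2) ≠ 0 := ne_of_gt ha
    field_simp
  rw [hc, one_smul, sub_neg_eq_add, sub_add_cancel]

/-- The key scalar identity. -/
lemma inner_confMap_Q (h v x : E4) (hx : ‖x‖ = 1) (hv : ‖v‖ < 1) :
    ⟪confMap v x, (1 - ‖v‖ ^ 2) • h - (2 * (‖h‖ ^ 2 - ⟪h, v⟫)) • v⟫
      - (‖h‖ ^ 2 * (1 + ‖v‖ ^ 2) - 2 * ⟪h, v⟫)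
    = ((1 - ‖v‖ ^ 2) ^ 2 / ‖x - v‖ ^ 2) * (⟪x, h⟫ - ‖h‖ ^ 2) := by
  have hd := sub_pos_of x v hx hv
  have hd2 : ‖x - v‖ ^ 2 = 1 - 2 * ⟪x, v⟫ + ‖v‖ ^ 2 := sub_norm_sq x v hx
  rw [confMap]
  simp only [inner_sub_left, inner_sub_right, real_inner_smul_left, real_inner_smul_right,
    real_inner_self_eq_norm_sq]
  rw [real_inner_comm v h]
  generalize hX : (⟪x, v⟫ : ℝ) = X at hd2 ⊢
  generalize (⟪x, h⟫ : ℝ) = xh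
  generalize (⟪h, v⟫ : ℝ) = s
  generalize hD : ‖x - v‖ = d at hd2 hd ⊢
  generalize ‖v‖ = nv at hd2 ⊢
  generalize ‖h‖ = nh
  have hDpos : (0:ℝ) < 1 - 2 * X + nv ^ 2 := by rw [← hd2]; positivity
  rw [hd2]
  field_simp
  ring

/-- `‖Q‖² = t² + ‖h‖²(1-‖h‖²)(1-‖v‖²)²`. -/
lemma normQ_sq (h v : E4) :
    ‖(1 - ‖v‖ ^ 2) • h - (2 * (‖h‖ ^ 2 - ⟪h, v⟫)) • v‖ ^ 2
    = (‖h‖ ^ 2 * (1 + ‖v‖ ^ 2) - 2 * ⟪h, v⟫) ^ 2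
      + ‖h‖ ^ 2 * (1 - ‖h‖ ^ 2) * (1 - ‖v‖ ^ 2) ^ 2 := by
  rw [norm_sub_sq_real, real_inner_smul_left, real_inner_smul_right, norm_smul, norm_smul,
    Real.norm_eq_abs, Real.norm_eq_abs, mul_pow, mul_pow, sq_abs, sq_abs]
  ring

lemma normQ_pos (h v : E4) (hh : h ≠ 0) (hh1 : ‖h‖ ≤ 1) (hv : ‖v‖ < 1) :
    0 < ‖(1 - ‖v‖ ^ 2) • h - (2 * (‖h‖ ^ 2 - ⟪h, v⟫)) • v‖ := by
  have hq := normQ_sq h v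
  have hnh : 0 < ‖h‖ := norm_pos_iff.mpr hh
  have hnv : 0 ≤ ‖v‖ := norm_nonneg v
  have hsq : 0 < ‖(1 - ‖v‖ ^ 2) • h - (2 * (‖h‖ ^ 2 - ⟪h, v⟫)) • v‖ ^ 2 := by
    rcases lt_or_eq_of_le hh1 with h1 | h1
    · have a2 : (0:ℝ) < 1 - ‖h‖ ^ 2 := by nlinarith
      have a3 : (0:ℝ) < 1 - ‖v‖ ^ 2 := by nlinarith
      have hpos : 0 < ‖h‖ ^ 2 * (1 - ‖h‖ ^ 2) * (1 - ‖v‖ ^ 2) ^ 2 := by positivity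
      nlinarith [sq_nonneg (‖h‖ ^ 2 * (1 + ‖v‖ ^ 2) - 2 * ⟪h, v⟫)]
    · have hcs := real_inner_le_norm h v
      have h12 : ‖h‖ ^ 2 = 1 := by rw [h1]; ring
      rw [h1, one_mul] at hcs
      have ht : 0 < ‖h‖ ^ 2 * (1 + ‖v‖ ^ 2) - 2 * ⟪h, v⟫ := by
        rw [h12, one_mul]
        nlinarith [mul_pos (sub_pos.mpr hv) (sub_pos.mpr hv)]
      have h0 : ‖h‖ ^ 2 * (1 - ‖h‖ ^ 2) * (1 - ‖v‖ ^ 2) ^ 2 = 0 := by rw [h12]; ring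
      nlinarith [mul_pos ht ht]
  nlinarith [norm_nonneg ((1 - ‖v‖ ^ 2) • h - (2 * (‖h‖ ^ 2 - ⟪h, v⟫)) • v)]

/-- Cap membership characterization for unit vectors. -/
lemma mem_cap_iff (c : E4) (hc : 0 < ‖c‖) (t : ℝ) (y : E4) (hy : ‖y‖ = 1) :
    y ∈ Metric.ball (‖c‖⁻¹ • c) (Real.sqrt (2 * (1 - t / ‖c‖))) ↔ t < ⟪y, c⟫ := by
  rw [mem_ball, dist_eq_norm, ← Real.sqrt_sq (norm_nonneg (y - ‖c‖⁻¹ • c))]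
  rw [Real.sqrt_lt_sqrt_iff (by positivity)]
  rw [norm_sub_sq_real, real_inner_smul_right, norm_smul, Real.norm_eq_abs,
    abs_inv, abs_norm, inv_mul_cancel₀ (ne_of_gt hc), hy]
  rw [div_eq_mul_inv]
  have hcinv : 0 < ‖c‖⁻¹ := inv_pos.mpr hc
  have hcc : ‖c‖⁻¹ * ‖c‖ = 1 := inv_mul_cancel₀ (ne_of_gt hc)
  constructor
  · intro h1
    nlinarith [mul_pos hc hc, mul_pos hcinv hc]
  · intro h1
    nlinarith [mul_pos hcinv (sub_pos.mpr h1)]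

/-- Lemma B.3 of Marques–Neves:  for `h ≠ 0` with `|h| ≤ 1` and `v ∈ B⁴`, the conformal
map `F_v` sends the spherical cap `B⁴_{√(2(1-|h|))}(h/|h|) ∩ S³` onto the spherical cap
`B⁴_R(Q/|Q|) ∩ S³`, where `Q = (1-|v|²)h - 2(|h|² - ⟪h,v⟫)v` and
`R = √(2(1 - (|h|²(1+|v|²) - 2⟪h,v⟫)/|Q|))`. -/
theorem confMap_image_of_cap (h v : E4) (hh : h ≠ 0) (hh1 : ‖h‖ ≤ 1) (hv : ‖v‖ < 1) :
    confMap v '' (Metric.ball (‖h‖⁻¹ • h) (Real.sqrt (2 * (1 - ‖h‖))) ∩ S3) =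
      Metric.ball
        (‖(1 - ‖v‖ ^ 2) • h - (2 * (‖h‖ ^ 2 - ⟪h, v⟫)) • v‖⁻¹ •
          ((1 - ‖v‖ ^ 2) • h - (2 * (‖h‖ ^ 2 - ⟪h, v⟫)) • v))
        (Real.sqrt (2 * (1 - (‖h‖ ^ 2 * (1 + ‖v‖ ^ 2) - 2 * ⟪h, v⟫) /
          ‖(1 - ‖v‖ ^ 2) • h - (2 * (‖h‖ ^ 2 - ⟪h, v⟫)) • v‖))) ∩ S3 := by
  have hnh : 0 < ‖h‖ := norm_pos_iff.mpr hh
  have hQpos := normQ_pos h v hh hh1 hv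
  have hrad : Real.sqrt (2 * (1 - ‖h‖)) = Real.sqrt (2 * (1 - ‖h‖ ^ 2 / ‖h‖)) := by
    rw [sq, mul_div_assoc, div_self (ne_of_gt hnh), mul_one]
  have hvneg : ‖-v‖ < 1 := by rwa [norm_neg]
  have hfacpos : ∀ x : E4, ‖x‖ = 1 → 0 < (1 - ‖v‖ ^ 2) ^ 2 / ‖x - v‖ ^ 2 := by
    intro x hx1
    have hd := sub_pos_of x v hx1 hv
    have ha : (0:ℝ) < 1 - ‖v‖ ^ 2 := by nlinarith [norm_nonneg v]
    positivity
  ext y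
  simp only [Set.mem_image, Set.mem_inter_iff, S3, mem_sphere_zero_iff_norm]
  constructor
  · rintro ⟨x, ⟨hball, hx1⟩, rfl⟩
    have hfn := confMap_norm v x hx1 hv
    refine ⟨?_, hfn⟩
    rw [mem_cap_iff _ hQpos _ _ hfn]
    have hxh : ‖h‖ ^ 2 < ⟪x, h⟫ := by
      rw [hrad] at hball
      exact (mem_cap_iff h hnh (‖h‖ ^ 2) x hx1).mp hball
    have hid := inner_confMap_Q h v x hx1 hv
    nlinarith [mul_pos (hfacpos x hx1) (sub_pos.mpr hxh)]
  · rintro ⟨hball, hy1⟩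
    have hx1 : ‖confMap (-v) y‖ = 1 := confMap_norm (-v) y hy1 hvneg
    have hfx : confMap v (confMap (-v) y) = y := by
      have := confMap_invol (-v) y hy1 hvneg
      rwa [neg_neg] at this
    refine ⟨confMap (-v) y, ⟨?_, hx1⟩, hfx⟩
    have hQy := (mem_cap_iff _ hQpos _ _ hy1).mp hball
    have hid := inner_confMap_Q h v (confMap (-v) y) hx1 hv
    rw [hfx] at hid
    have hxh : ‖h‖ ^ 2 < ⟪confMap (-v) y, h⟫ := by
      by_contra hA
      push_neg at hA
      nlinarith [mul_nonneg (hfacpos (confMap (-v) y) hx1).le (sub_nonneg.mpr hA)]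
    rw [hrad]
    exact (mem_cap_iff h hnh (‖h‖ ^ 2) _ hx1).mpr hxh
end
end

section
/- Let x ∈ S³ and v ∈ B⁴ (the open unit ball in ℝ⁴). Then F_v(B⁴_{√2}(x) ∩ S³) = B⁴_R(Q/|Q|) ∩ S³, where Q = (1−|v|²)x + 2⟨x,v⟩v and R = √(2(1 + 2⟨x,v⟩/|Q|)); that is, the conformal map F_v sends the open hemisphere of S³ centered at x to the spherical cap B⁴_R(Q/|Q|) ∩ S³. -/
noncomputable section

open Metric
open scoped RealInnerProductSpace

/-!
`F_v` is a bijection of `S³` with inverse `F_{-v}`, so the image of the hemisphere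
`{⟪y, x⟫ > 0}` is the set of `z ∈ S³` with `F_{-v} z` in it. The identity
`⟪F_v y, Q⟫ + 2⟪x, v⟫ = (1 - |v|²)² ⟪y, x⟫ / |y - v|²` for `y ∈ S³` turns this into the
half-space condition `⟪z, Q⟫ > -2⟪x, v⟫`, which on `S³` is the ball of radius `R`
about `Q / |Q|`.
-/

open Set

lemma one_sub_norm_sq_pos {E : Type*} [SeminormedAddGroup E] {v : E} (hv : ‖v‖ < 1) :
    0 < 1 - ‖v‖ ^ 2 := by
  nlinarith [norm_nonneg v]

lemma norm_sub_sq_pos_of_norm_lt_norm {E : Type*} [NormedAddGroup E] {y v : E}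
    (h : ‖v‖ < ‖y‖) : 0 < ‖y - v‖ ^ 2 :=
  pow_pos (norm_pos_iff.2 (sub_ne_zero.2 fun hyv => h.ne (by rw [hyv]))) 2

section UnitVectors

variable {E : Type*} [NormedAddCommGroup E] [InnerProductSpace ℝ E]

lemma norm_sub_sq_of_norm_eq_one {y u : E} (hy : ‖y‖ = 1) (hu : ‖u‖ = 1) :
    ‖y - u‖ ^ 2 = 2 * (1 - ⟪y, u⟫) := by
  rw [norm_sub_sq_real, hy, hu]
  ring

lemma norm_sub_sq_of_norm_eq_one_left {y v : E} (hy : ‖y‖ = 1) :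
    ‖y - v‖ ^ 2 = 1 - 2 * ⟪y, v⟫ + ‖v‖ ^ 2 := by
  rw [norm_sub_sq_real, hy, one_pow]

lemma dist_lt_sqrt_two_iff_inner_pos {y x : E} (hy : ‖y‖ = 1) (hx : ‖x‖ = 1) :
    dist y x < √2 ↔ 0 < ⟪y, x⟫ := by
  rw [dist_eq_norm, Real.lt_sqrt (norm_nonneg _), norm_sub_sq_of_norm_eq_one hy hx]
  constructor <;> intro h <;> linarith

lemma dist_normalize_lt_sqrt_iff {z Q : E} (hz : ‖z‖ = 1) (hQ : Q ≠ 0) (b : ℝ) :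
    dist z (‖Q‖⁻¹ • Q) < √(2 * (1 + b / ‖Q‖)) ↔ -b < ⟪z, Q⟫ := by
  have hQpos : 0 < ‖Q‖ := norm_pos_iff.2 hQ
  have hunit : ‖‖Q‖⁻¹ • Q‖ = 1 := by
    rw [norm_smul, norm_inv, norm_norm, inv_mul_cancel₀ hQpos.ne']
  rw [dist_eq_norm, Real.lt_sqrt (norm_nonneg _), norm_sub_sq_of_norm_eq_one hz hunit,
    real_inner_smul_right, inv_mul_eq_div, ← div_lt_div_iff_of_pos_right (a := -b) hQpos, neg_div]
  constructor <;> intro h <;> linarith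

lemma norm_sq_smul_add_smul_inner (x v : E) :
    ‖(1 - ‖v‖ ^ 2) • x + (2 * ⟪x, v⟫) • v‖ ^ 2 = (1 - ‖v‖ ^ 2) ^ 2 * ‖x‖ ^ 2 + 4 * ⟪x, v⟫ ^ 2 := by
  rw [norm_add_sq_real, norm_smul, norm_smul, real_inner_smul_left, real_inner_smul_right,
    Real.norm_eq_abs, Real.norm_eq_abs, mul_pow, mul_pow, sq_abs, sq_abs]
  ring

lemma smul_add_smul_inner_ne_zero {x v : E} (hx : ‖x‖ = 1) (hv : ‖v‖ < 1) :
    (1 - ‖v‖ ^ 2) • x + (2 * ⟪x, v⟫) • v ≠ 0 := by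
  have hs := one_sub_norm_sq_pos hv
  rw [← norm_ne_zero_iff, ← pow_ne_zero_iff two_ne_zero, norm_sq_smul_add_smul_inner, hx]
  positivity

end UnitVectors

section ConfMap

variable {v y : E4}

lemma norm_confMap (hv : ‖v‖ < 1) (hy : ‖y‖ = 1) : ‖confMap v y‖ = 1 := by
  have hD := (norm_sub_sq_pos_of_norm_lt_norm (hv.trans_eq hy.symm)).ne'
  rw [← pow_eq_one_iff_of_nonneg (norm_nonneg _) two_ne_zero, confMap, norm_sub_sq_real,
    norm_smul, real_inner_smul_left, inner_sub_left, mul_pow, Real.norm_eq_abs, sq_abs,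
    real_inner_self_eq_norm_sq]
  rw [norm_sub_sq_of_norm_eq_one_left hy] at hD ⊢
  field_simp
  ring

lemma confMap_neg_confMap (hv : ‖v‖ < 1) (hy : ‖y‖ = 1) : confMap (-v) (confMap v y) = y := by
  have hD := (norm_sub_sq_pos_of_norm_lt_norm (hv.trans_eq hy.symm)).ne'
  have hs := (one_sub_norm_sq_pos hv).ne'
  set D := ‖y - v‖ ^ 2
  have hcoeff : (1 - ‖v‖ ^ 2) / (‖(1 - ‖v‖ ^ 2) / D‖ ^ 2 * D) * ((1 - ‖v‖ ^ 2) / D) = 1 := by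
    rw [Real.norm_eq_abs, sq_abs]
    field_simp
  rw [confMap, confMap, sub_neg_eq_add, sub_neg_eq_add, sub_add_cancel, norm_neg, norm_smul,
    mul_pow, smul_smul, hcoeff, one_smul, sub_add_cancel]

lemma bijOn_confMap (hv : ‖v‖ < 1) : BijOn (confMap v) S3 S3 := by
  have hv' : ‖-v‖ < 1 := by rwa [norm_neg]
  have hmaps : ∀ {w : E4}, ‖w‖ < 1 → MapsTo (confMap w) S3 S3 := fun hw _ hy =>
    mem_sphere_zero_iff_norm.2 (norm_confMap hw (mem_sphere_zero_iff_norm.1 hy))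
  refine InvOn.bijOn ⟨fun y hy => ?_, fun z hz => ?_⟩ (hmaps hv) (hmaps hv')
  · exact confMap_neg_confMap hv (mem_sphere_zero_iff_norm.1 hy)
  · simpa using confMap_neg_confMap hv' (mem_sphere_zero_iff_norm.1 hz)

lemma inner_confMap_add_two_inner (x : E4) (hv : ‖v‖ < 1) (hy : ‖y‖ = 1) :
    ⟪confMap v y, (1 - ‖v‖ ^ 2) • x + (2 * ⟪x, v⟫) • v⟫ + 2 * ⟪x, v⟫ =
      (1 - ‖v‖ ^ 2) ^ 2 / ‖y - v‖ ^ 2 * ⟪y, x⟫ := by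
  have hD := (norm_sub_sq_pos_of_norm_lt_norm (hv.trans_eq hy.symm)).ne'
  simp only [confMap, inner_sub_left, inner_add_right, real_inner_smul_left,
    real_inner_smul_right, real_inner_self_eq_norm_sq, real_inner_comm v x]
  rw [norm_sub_sq_of_norm_eq_one_left hy] at hD ⊢
  field_simp
  ring

end ConfMap

/-- Lemma B.4 of Marques–Neves:  for `x ∈ S³` and `v ∈ B⁴`, the conformal map `F_v`
sends the open hemisphere `B⁴_{√2}(x) ∩ S³` centered at `x` onto the spherical cap
`B⁴_R(Q/|Q|) ∩ S³`, where `Q = (1-|v|²)x + 2⟪x,v⟫v` and `R = √(2(1 + 2⟪x,v⟫/|Q|))`. -/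
theorem confMap_image_of_hemisphere (x v : E4) (hx : x ∈ S3) (hv : ‖v‖ < 1) :
    confMap v '' (Metric.ball x (Real.sqrt 2) ∩ S3) =
      Metric.ball
        (‖(1 - ‖v‖ ^ 2) • x + (2 * ⟪x, v⟫) • v‖⁻¹ • ((1 - ‖v‖ ^ 2) • x + (2 * ⟪x, v⟫) • v))
        (Real.sqrt (2 * (1 + 2 * ⟪x, v⟫ / ‖(1 - ‖v‖ ^ 2) • x + (2 * ⟪x, v⟫) • v‖))) ∩ S3 := by
  have hx1 : ‖x‖ = 1 := mem_sphere_zero_iff_norm.1 hx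
  have hQ := smul_add_smul_inner_ne_zero hx1 hv
  set Q := (1 - ‖v‖ ^ 2) • x + (2 * ⟪x, v⟫) • v
  have hpreimage : ball x √2 ∩ S3 =
      S3 ∩ confMap v ⁻¹' ball (‖Q‖⁻¹ • Q) √(2 * (1 + 2 * ⟪x, v⟫ / ‖Q‖)) := by
    ext y
    rw [mem_inter_iff, and_comm, mem_inter_iff, mem_preimage]
    refine and_congr_right fun hy => ?_
    have hy1 : ‖y‖ = 1 := mem_sphere_zero_iff_norm.1 hy
    have hcoeff : 0 < (1 - ‖v‖ ^ 2) ^ 2 / ‖y - v‖ ^ 2 :=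
      div_pos (pow_pos (one_sub_norm_sq_pos hv) 2)
        (norm_sub_sq_pos_of_norm_lt_norm (hv.trans_eq hy1.symm))
    rw [mem_ball, mem_ball, dist_lt_sqrt_two_iff_inner_pos hy1 hx1,
      dist_normalize_lt_sqrt_iff (norm_confMap hv hy1) hQ, neg_lt_iff_pos_add,
      inner_confMap_add_two_inner x hv hy1, mul_pos_iff_of_pos_left hcoeff]
  rw [hpreimage, image_inter_preimage, (bijOn_confMap hv).image_eq, inter_comm]
end
end
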